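/- arXiv:2002.11875 — 3 statements merged into one kernel-verified Lean document; each statement's English description precedes it below -/
import Mathlib

section
/- Let f : ℝ^n × ℝ^m → ℝ be continuously differentiable, with f(·,y) convex for every y ∈ ℝ^m and f(x,·) concave for every x ∈ ℝ^n. Then for any (x,y) ∈ ℝ^n × ℝ^m the following are equivalent: (a) (x,y) is a local minimax point of f; (b) (x,y) is stationary, i.e. ∂_x f(x,y) = 0 and ∂_y f(x,y) = 0; (c) (x,y) is a global saddle point of f. Moreover, each of these conditions implies that (x,y) is a global minimax point of f. -/
/-!
Convexity turns a vanishing partial derivative into global optimality: the subgradient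
inequality shows that a stationary point minimizes `f (·, y)` and maximizes `f (x, ·)`, and a
saddle point is trivially local minimax and global minimax. Conversely, at a local minimax point
`y` is a local maximizer, so `∂_y f = 0`. If `∂_x f (x, y) v > 0`, continuity of `∂_x f` and the
subgradient inequality at `x - t • v` show that this short step lowers `f (·, y')` by a fixed
amount simultaneously for all `y'` near `y`; it therefore pushes the local upper envelope below
`f (x, y)`, which the envelope attains at `x`, contradicting its local minimality.
-/

open Filter

/-- Local upper envelope `f̄_{ε,y*}` (unconstrained case), in the extended reals. -/
noncomputable def envU {n m : ℕ}
    (f : EuclideanSpace ℝ (Fin n) → EuclideanSpace ℝ (Fin m) → ℝ)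
    (ystar : EuclideanSpace ℝ (Fin m)) (ε : ℝ)
    (x : EuclideanSpace ℝ (Fin n)) : EReal :=
  ⨆ y ∈ {y : EuclideanSpace ℝ (Fin m) | ‖y - ystar‖ ≤ ε}, ((f x y : ℝ) : EReal)

/-- `(x*, y*)` is a local minimax point of `f` (unconstrained case). -/
def IsLocalMinimax {n m : ℕ}
    (f : EuclideanSpace ℝ (Fin n) → EuclideanSpace ℝ (Fin m) → ℝ)
    (xstar : EuclideanSpace ℝ (Fin n)) (ystar : EuclideanSpace ℝ (Fin m)) : Prop :=
  (∃ ε > (0 : ℝ), ∀ y, ‖y - ystar‖ ≤ ε → f xstar y ≤ f xstar ystar) ∧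
  (∃ εseq : ℕ → ℝ, (∀ k, 0 < εseq k) ∧ Tendsto εseq atTop (nhds 0) ∧
    ∀ k, ∃ δ > (0 : ℝ), ∀ x, ‖x - xstar‖ ≤ δ →
      envU f ystar (εseq k) xstar ≤ envU f ystar (εseq k) x)

/-- `(xs, ys)` is a global saddle point of `f` (unconstrained case). -/
def IsGlobalSaddle {n m : ℕ}
    (f : EuclideanSpace ℝ (Fin n) → EuclideanSpace ℝ (Fin m) → ℝ)
    (xs : EuclideanSpace ℝ (Fin n)) (ys : EuclideanSpace ℝ (Fin m)) : Prop :=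
  (∀ y, f xs y ≤ f xs ys) ∧ (∀ x, f xs ys ≤ f x ys)

/-- `(xs, ys)` is a global minimax point of `f` (unconstrained case). -/
def IsGlobalMinimax {n m : ℕ}
    (f : EuclideanSpace ℝ (Fin n) → EuclideanSpace ℝ (Fin m) → ℝ)
    (xs : EuclideanSpace ℝ (Fin n)) (ys : EuclideanSpace ℝ (Fin m)) : Prop :=
  (∀ y, f xs y ≤ f xs ys) ∧
  (∀ x, ∀ c : ℝ, (∀ y, f x y ≤ c) → f xs ys ≤ c)

/-- `(x, y)` is a stationary point of `f`: both partial gradients vanish. -/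
def IsStationaryPair {n m : ℕ}
    (f : EuclideanSpace ℝ (Fin n) → EuclideanSpace ℝ (Fin m) → ℝ)
    (x : EuclideanSpace ℝ (Fin n)) (y : EuclideanSpace ℝ (Fin m)) : Prop :=
  gradient (fun x' => f x' y) x = 0 ∧ gradient (fun y' => f x y') y = 0

open Set Topology

section Convex

variable {E : Type*} [NormedAddCommGroup E] [NormedSpace ℝ E] {g : E → ℝ} {L : E →L[ℝ] ℝ} {b : E}

theorem ConvexOn.add_le_of_hasFDerivAt (hg : ConvexOn ℝ univ g) (hL : HasFDerivAt g L b)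
    (a : E) : g b + L (a - b) ≤ g a := by
  set γ : ℝ →ᵃ[ℝ] E := AffineMap.lineMap b a
  have hL' : HasFDerivAt g L (γ 0) := by simpa [γ] using hL
  have hslope := (hg.comp_affineMap γ).le_slope_of_hasDerivAt (mem_univ 0) (mem_univ 1)
    one_pos (hL'.comp_hasDerivAt 0 AffineMap.hasDerivAt_lineMap)
  simp only [slope, γ, Function.comp_apply, AffineMap.lineMap_apply_zero,
    AffineMap.lineMap_apply_one, vsub_eq_sub, sub_zero, inv_one, one_smul] at hslope
  linarith

theorem ConcaveOn.le_add_of_hasFDerivAt (hg : ConcaveOn ℝ univ g) (hL : HasFDerivAt g L b)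
    (a : E) : g a ≤ g b + L (a - b) := by
  have := hg.neg.add_le_of_hasFDerivAt hL.neg a
  simp only [Pi.neg_apply, neg_apply] at this
  linarith

theorem ConvexOn.le_of_hasFDerivAt_zero (hg : ConvexOn ℝ univ g)
    (h0 : HasFDerivAt g (0 : E →L[ℝ] ℝ) b) (a : E) : g b ≤ g a := by
  simpa using hg.add_le_of_hasFDerivAt h0 a

theorem ConcaveOn.le_of_hasFDerivAt_zero (hg : ConcaveOn ℝ univ g)
    (h0 : HasFDerivAt g (0 : E →L[ℝ] ℝ) b) (a : E) : g a ≤ g b := by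
  simpa using hg.le_add_of_hasFDerivAt h0 a

end Convex

theorem gradient_eq_zero_iff_fderiv_eq_zero {F : Type*} [NormedAddCommGroup F]
    [InnerProductSpace ℝ F] [CompleteSpace F] {g : F → ℝ} {x : F} :
    gradient g x = 0 ↔ fderiv ℝ g x = 0 := by
  simp [gradient]

section Partial

variable {𝕜 E F G : Type*} [NontriviallyNormedField 𝕜] [NormedAddCommGroup E] [NormedSpace 𝕜 E]
  [NormedAddCommGroup F] [NormedSpace 𝕜 F] [NormedAddCommGroup G] [NormedSpace 𝕜 G]
  {f : E → F → G}

theorem ContDiff.differentiableAt_left (hf : ContDiff 𝕜 1 (fun p : E × F => f p.1 p.2))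
    (x : E) (y : F) : DifferentiableAt 𝕜 (fun x' => f x' y) x :=
  ((hf.comp (contDiff_id.prodMk contDiff_const)).differentiable one_ne_zero) x

theorem ContDiff.differentiableAt_right (hf : ContDiff 𝕜 1 (fun p : E × F => f p.1 p.2))
    (x : E) (y : F) : DifferentiableAt 𝕜 (fun y' => f x y') y :=
  ((hf.comp (contDiff_const.prodMk contDiff_id)).differentiable one_ne_zero) y

theorem ContDiff.continuous_fderiv_left (hf : ContDiff 𝕜 1 (fun p : E × F => f p.1 p.2)) :
    Continuous (fun p : E × F => fderiv 𝕜 (fun x' => f x' p.2) p.1) := by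
  have hf' : ContDiff 𝕜 1 (Function.uncurry fun (p : E × F) (x' : E) => f x' p.2) :=
    hf.comp (contDiff_snd.prodMk (contDiff_snd.comp contDiff_fst))
  exact (hf'.fderiv (n := 0) contDiff_fst (by simp)).continuous

end Partial

theorem exists_uniform_descent_of_fderiv_ne_zero {E F : Type*} [NormedAddCommGroup E]
    [NormedSpace ℝ E] [PseudoMetricSpace F] {f : E → F → ℝ} {x : E} {y : F}
    (hconv : ∀ y, ConvexOn ℝ univ (fun x => f x y))
    (hd : ∀ x y, DifferentiableAt ℝ (fun x' => f x' y) x)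
    (hcont : ContinuousAt (fun p : E × F => fderiv ℝ (fun x' => f x' p.2) p.1) (x, y))
    (hx : fderiv ℝ (fun x' => f x' y) x ≠ 0) :
    ∃ r > 0, ∀ δ > 0, ∃ x', ‖x' - x‖ ≤ δ ∧
      ∃ η > 0, ∀ y', dist y' y < r → f x' y' + η ≤ f x y' := by
  obtain ⟨v, hv⟩ : ∃ v, 0 < fderiv ℝ (fun x' => f x' y) x v := by
    obtain ⟨w, hw⟩ : ∃ w, fderiv ℝ (fun x' => f x' y) x w ≠ 0 := by
      by_contra! h
      exact hx (ContinuousLinearMap.ext h)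
    rcases hw.lt_or_gt with h | h
    · exact ⟨-w, by simpa using h⟩
    · exact ⟨w, h⟩
  set c := fderiv ℝ (fun x' => f x' y) x v / 2
  obtain ⟨r, hr, hslope⟩ : ∃ r > 0, ∀ p : E × F, dist p (x, y) < r →
      c < fderiv ℝ (fun x' => f x' p.2) p.1 v :=
    Metric.eventually_nhds_iff.mp
      ((hcont.clm_apply continuousAt_const).eventually (lt_mem_nhds (half_lt_self hv)))
  refine ⟨r, hr, fun δ hδ => ?_⟩
  obtain ⟨t, ht, htv⟩ : ∃ t : ℝ, 0 < t ∧ ‖t • v‖ < min δ r := by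
    have hlim : Tendsto (fun t : ℝ => ‖t • v‖) (𝓝[>] 0) (𝓝 0) := by
      simpa using ((continuous_id.smul continuous_const).norm.tendsto' (0 : ℝ) (‖(0 : ℝ) • v‖)
        rfl).mono_left nhdsWithin_le_nhds
    exact (eventually_mem_nhdsWithin.and (hlim.eventually (gt_mem_nhds (lt_min hδ hr)))).exists
  refine ⟨x - t • v, by simpa using htv.le.trans (min_le_left _ _), t * c, by positivity,
    fun y' hy' => ?_⟩
  have hnear : c < fderiv ℝ (fun x' => f x' y') (x - t • v) v := by
    refine hslope (x - t • v, y') (max_lt ?_ hy')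
    simpa [dist_eq_norm] using htv.trans_le (min_le_right _ _)
  have hsub := (hconv y').add_le_of_hasFDerivAt (hd (x - t • v) y').hasFDerivAt x
  rw [sub_sub_cancel, map_smul, smul_eq_mul] at hsub
  linarith [mul_lt_mul_of_pos_left hnear ht]

theorem envU_le_coe {n m : ℕ} {f : EuclideanSpace ℝ (Fin n) → EuclideanSpace ℝ (Fin m) → ℝ}
    {ystar : EuclideanSpace ℝ (Fin m)} {ε : ℝ} {x : EuclideanSpace ℝ (Fin n)} {c : ℝ}
    (h : ∀ y, ‖y - ystar‖ ≤ ε → f x y ≤ c) : envU f ystar ε x ≤ c :=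
  iSup₂_le fun y hy => EReal.coe_le_coe_iff.mpr (h y hy)

theorem coe_le_envU {n m : ℕ} {f : EuclideanSpace ℝ (Fin n) → EuclideanSpace ℝ (Fin m) → ℝ}
    {ystar : EuclideanSpace ℝ (Fin m)} {ε : ℝ} {x : EuclideanSpace ℝ (Fin n)}
    {y : EuclideanSpace ℝ (Fin m)} (hy : ‖y - ystar‖ ≤ ε) : (f x y : EReal) ≤ envU f ystar ε x :=
  le_iSup₂ (f := fun y _ => (f x y : EReal)) y hy

section Minimax

variable {n m : ℕ} {f : EuclideanSpace ℝ (Fin n) → EuclideanSpace ℝ (Fin m) → ℝ}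
  {x : EuclideanSpace ℝ (Fin n)} {y : EuclideanSpace ℝ (Fin m)}

theorem IsLocalMinimax.isLocalMax_right (h : IsLocalMinimax f x y) :
    IsLocalMax (fun y' => f x y') y :=
  let ⟨ε, hε, hmax⟩ := h.1
  Filter.mem_of_superset (Metric.closedBall_mem_nhds y hε) fun y' hy' =>
    hmax y' (by rwa [Metric.mem_closedBall, dist_eq_norm] at hy')

theorem IsLocalMinimax.fderiv_left_eq_zero (h : IsLocalMinimax f x y)
    (hconv : ∀ y, ConvexOn ℝ univ (fun x => f x y))
    (hd : ∀ x y, DifferentiableAt ℝ (fun x' => f x' y) x)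
    (hcont : ContinuousAt (fun p => fderiv ℝ (fun x' => f x' p.2) p.1) (x, y)) :
    fderiv ℝ (fun x' => f x' y) x = 0 := by
  obtain ⟨⟨ε, hε, hmax⟩, εs, hεpos, hεlim, hmin⟩ := h
  by_contra hx
  obtain ⟨r, hr, hdescent⟩ := exists_uniform_descent_of_fderiv_ne_zero hconv hd hcont hx
  obtain ⟨k, hk⟩ := (hεlim.eventually (gt_mem_nhds (lt_min hε hr))).exists
  obtain ⟨δ, hδ, hloc⟩ := hmin k
  obtain ⟨x', hx', η, hη, hdrop⟩ := hdescent δ hδ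
  have hupper : ∀ y', ‖y' - y‖ ≤ εs k → f x' y' ≤ f x y - η := fun y' hy' => by
    have hdrop' := hdrop y' <| by
      rw [dist_eq_norm]; exact hy'.trans_lt (hk.trans_le (min_le_right _ _))
    linarith [hmax y' (hy'.trans (hk.le.trans (min_le_left _ _)))]
  have hcontra : (f x y : EReal) ≤ (f x y - η : ℝ) :=
    calc (f x y : EReal) ≤ envU f y (εs k) x := coe_le_envU (by simpa using (hεpos k).le)
      _ ≤ envU f y (εs k) x' := hloc x' hx'
      _ ≤ (f x y - η : ℝ) := envU_le_coe hupper
  linarith [EReal.coe_le_coe_iff.mp hcontra]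

theorem IsLocalMinimax.isStationaryPair (h : IsLocalMinimax f x y)
    (hf : ContDiff ℝ 1 (fun p : EuclideanSpace ℝ (Fin n) × EuclideanSpace ℝ (Fin m) => f p.1 p.2))
    (hconv : ∀ y, ConvexOn ℝ univ (fun x => f x y)) : IsStationaryPair f x y := by
  simp only [IsStationaryPair, gradient_eq_zero_iff_fderiv_eq_zero]
  exact ⟨h.fderiv_left_eq_zero hconv hf.differentiableAt_left
      hf.continuous_fderiv_left.continuousAt,
    h.isLocalMax_right.fderiv_eq_zero⟩

theorem IsStationaryPair.isGlobalSaddle (h : IsStationaryPair f x y)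
    (hf : ContDiff ℝ 1 (fun p : EuclideanSpace ℝ (Fin n) × EuclideanSpace ℝ (Fin m) => f p.1 p.2))
    (hconv : ∀ y, ConvexOn ℝ univ (fun x => f x y))
    (hconc : ∀ x, ConcaveOn ℝ univ (fun y => f x y)) : IsGlobalSaddle f x y := by
  obtain ⟨hx, hy⟩ := h
  rw [gradient_eq_zero_iff_fderiv_eq_zero] at hx hy
  exact ⟨(hconc x).le_of_hasFDerivAt_zero (hy ▸ (hf.differentiableAt_right x y).hasFDerivAt),
    (hconv y).le_of_hasFDerivAt_zero (hx ▸ (hf.differentiableAt_left x y).hasFDerivAt)⟩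

theorem IsGlobalSaddle.isLocalMinimax (h : IsGlobalSaddle f x y) : IsLocalMinimax f x y := by
  refine ⟨⟨1, one_pos, fun y' _ => h.1 y'⟩, fun k => 1 / (k + 1 : ℝ), fun k => by positivity,
    tendsto_one_div_add_atTop_nhds_zero_nat, fun k => ⟨1, one_pos, fun x' _ => ?_⟩⟩
  calc envU f y (1 / (k + 1 : ℝ)) x ≤ (f x y : EReal) := envU_le_coe fun y' _ => h.1 y'
    _ ≤ (f x' y : EReal) := EReal.coe_le_coe_iff.mpr (h.2 x')
    _ ≤ envU f y (1 / (k + 1 : ℝ)) x' := coe_le_envU (by simp; positivity)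

theorem IsGlobalSaddle.isGlobalMinimax (h : IsGlobalSaddle f x y) : IsGlobalMinimax f x y :=
  ⟨h.1, fun x' _ hc => (h.2 x').trans (hc y)⟩

end Minimax

/-- For a continuously differentiable convex-concave function, local minimax,
stationarity and global saddle are all equivalent; each implies global minimax. -/
theorem convexConcave_localMinimax_iff_stationary_iff_saddle {n m : ℕ}
    (f : EuclideanSpace ℝ (Fin n) → EuclideanSpace ℝ (Fin m) → ℝ)
    (hf : ContDiff ℝ 1 (fun p : EuclideanSpace ℝ (Fin n) × EuclideanSpace ℝ (Fin m) => f p.1 p.2))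
    (hconv : ∀ y, ConvexOn ℝ Set.univ (fun x => f x y))
    (hconc : ∀ x, ConcaveOn ℝ Set.univ (fun y => f x y))
    (x : EuclideanSpace ℝ (Fin n)) (y : EuclideanSpace ℝ (Fin m)) :
    (IsLocalMinimax f x y ↔ IsStationaryPair f x y) ∧
    (IsStationaryPair f x y ↔ IsGlobalSaddle f x y) ∧
    (IsLocalMinimax f x y → IsGlobalMinimax f x y) := by
  have stationary_of_localMinimax : IsLocalMinimax f x y → IsStationaryPair f x y :=
    fun h => h.isStationaryPair hf hconv
  have saddle_of_stationary : IsStationaryPair f x y → IsGlobalSaddle f x y :=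
    fun h => h.isGlobalSaddle hf hconv hconc
  exact ⟨⟨stationary_of_localMinimax, fun h => (saddle_of_stationary h).isLocalMinimax⟩,
    ⟨saddle_of_stationary, fun h => stationary_of_localMinimax h.isLocalMinimax⟩,
    fun h => (saddle_of_stationary (stationary_of_localMinimax h)).isGlobalMinimax⟩
end

section
/- Let f : ℝ^n × ℝ^m → ℝ be twice continuously differentiable and let (x*,y*) satisfy ∂_x f(x*,y*) = 0 and ∂_y f(x*,y*) = 0. If the Hessian block B := ∂²_{yy} f(x*,y*) is negative definite and the Schur complement ∂²_{xx} f(x*,y*) − ∂²_{xy} f(x*,y*) · B⁻¹ · ∂²_{yx} f(x*,y*) is positive definite, then (x*,y*) is a local minimax point of f. -/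
/-!
Write `F(x, y) = f x y`, `p* = (x*, y*)`, `Q = D²F(p*)`, `B = ∂²_{yy} f(p*)`, `C = ∂²_{yx} f(p*)`
and `S` for the Schur complement. Since `DF(p*) = 0`, Taylor's formula reads
`F(p* + h) = F(p*) + Q(h, h) / 2 + o(‖h‖²)`. Along `h = (0, v)` we have `Q(h, h) = vᵀ B v ≤ -c‖v‖²`,
so `y*` is a local maximizer of `f x*`. Along the linearized best response `h = (u, -B⁻¹ C u)` the
cross terms cancel and `Q(h, h) = uᵀ S u ≥ c‖u‖²`, so `x ↦ f x (y* - B⁻¹ C (x - x*))` has a local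
minimum at `x*`. For every `ε > 0` this response stays `ε`-close to `y*` near `x*`, hence
`f̄_ε(x) ≥ f(x*, y*) ≥ f̄_ε(x*)`, the last inequality once `ε` is below the radius of the local
maximum.
-/

open Filter

/-- The `n × n` Hessian block of `f` in the `x`-variables. -/
noncomputable def hessXX {n m : ℕ}
    (f : EuclideanSpace ℝ (Fin n) → EuclideanSpace ℝ (Fin m) → ℝ)
    (x : EuclideanSpace ℝ (Fin n)) (y : EuclideanSpace ℝ (Fin m)) :
    Matrix (Fin n) (Fin n) ℝ :=
  fun i j =>
    fderiv ℝ (fun x' => fderiv ℝ (fun x'' => f x'' y) x' (EuclideanSpace.single j (1 : ℝ)))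
      x (EuclideanSpace.single i (1 : ℝ))

/-- The `m × m` Hessian block of `f` in the `y`-variables. -/
noncomputable def hessYY {n m : ℕ}
    (f : EuclideanSpace ℝ (Fin n) → EuclideanSpace ℝ (Fin m) → ℝ)
    (x : EuclideanSpace ℝ (Fin n)) (y : EuclideanSpace ℝ (Fin m)) :
    Matrix (Fin m) (Fin m) ℝ :=
  fun i j =>
    fderiv ℝ (fun y' => fderiv ℝ (fun y'' => f x y'') y' (EuclideanSpace.single j (1 : ℝ)))
      y (EuclideanSpace.single i (1 : ℝ))

/-- The `n × m` mixed Hessian block `∂²_{xy} f` (differentiate in `y`, then in `x`). -/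
noncomputable def hessXY {n m : ℕ}
    (f : EuclideanSpace ℝ (Fin n) → EuclideanSpace ℝ (Fin m) → ℝ)
    (x : EuclideanSpace ℝ (Fin n)) (y : EuclideanSpace ℝ (Fin m)) :
    Matrix (Fin n) (Fin m) ℝ :=
  fun i j =>
    fderiv ℝ (fun x' => fderiv ℝ (fun y'' => f x' y'') y (EuclideanSpace.single j (1 : ℝ)))
      x (EuclideanSpace.single i (1 : ℝ))

/-- The `m × n` mixed Hessian block `∂²_{yx} f` (differentiate in `x`, then in `y`). -/
noncomputable def hessYX {n m : ℕ}
    (f : EuclideanSpace ℝ (Fin n) → EuclideanSpace ℝ (Fin m) → ℝ)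
    (x : EuclideanSpace ℝ (Fin n)) (y : EuclideanSpace ℝ (Fin m)) :
    Matrix (Fin m) (Fin n) ℝ :=
  fun j i =>
    fderiv ℝ (fun y' => fderiv ℝ (fun x'' => f x'' y') x (EuclideanSpace.single i (1 : ℝ)))
      y (EuclideanSpace.single j (1 : ℝ))

/-- A real matrix is negative definite iff its negation is positive definite. -/
def Matrix.NegDef' {m : ℕ} (M : Matrix (Fin m) (Fin m) ℝ) : Prop := (-M).PosDef


open Asymptotics Metric Topology Matrix ContinuousLinearMap

theorem isLocalMinimax_of_isLocalMax_of_isLocalMin {n m : ℕ}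
    {f : EuclideanSpace ℝ (Fin n) → EuclideanSpace ℝ (Fin m) → ℝ}
    {xstar : EuclideanSpace ℝ (Fin n)} {ystar : EuclideanSpace ℝ (Fin m)}
    (hmax : IsLocalMax (f xstar) ystar)
    {r : EuclideanSpace ℝ (Fin n) → EuclideanSpace ℝ (Fin m)} (hr : ContinuousAt r xstar)
    (hrx : r xstar = ystar) (hmin : IsLocalMin (fun x => f x (r x)) xstar) :
    IsLocalMinimax f xstar ystar := by
  obtain ⟨ρ, hρ, hball⟩ := nhds_basis_closedBall.mem_iff.1 hmax
  refine ⟨⟨ρ, hρ, fun y hy => hball (mem_closedBall_iff_norm.2 hy)⟩,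
    fun k => ρ / (k + 1), fun k => by positivity, ?_, fun k => ?_⟩
  · simpa [div_eq_mul_one_div ρ] using tendsto_one_div_add_atTop_nhds_zero_nat.const_mul ρ
  · have hε : 0 < ρ / (k + 1) := by positivity
    have henv : envU f ystar (ρ / (k + 1)) xstar ≤ f xstar ystar := by
      refine iSup₂_le fun y hy => EReal.coe_le_coe_iff.2 (hball ?_)
      refine closedBall_subset_closedBall ?_ (mem_closedBall_iff_norm.2 hy)
      exact div_le_self hρ.le (by linarith [k.cast_nonneg (α := ℝ)])
    have hnear : ∀ᶠ x in 𝓝 xstar,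
        ‖r x - ystar‖ ≤ ρ / (k + 1) ∧ f xstar ystar ≤ f x (r x) := by
      filter_upwards [hr.eventually (closedBall_mem_nhds _ hε), hmin] with x hxr hxf
      rw [hrx] at hxr hxf
      exact ⟨mem_closedBall_iff_norm.1 hxr, hxf⟩
    obtain ⟨δ, hδ, hδball⟩ := nhds_basis_closedBall.mem_iff.1 hnear
    refine ⟨δ, hδ, fun x hx => henv.trans ?_⟩
    obtain ⟨hrxε, hfx⟩ := hδball (mem_closedBall_iff_norm.2 hx)
    exact le_iSup₂_of_le (r x) hrxε (EReal.coe_le_coe_iff.2 hfx)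

section Taylor

variable {E V : Type*} [NormedAddCommGroup E] [NormedSpace ℝ E]
  [NormedAddCommGroup V] [NormedSpace ℝ V] {F : E → ℝ} {p₀ : E}

theorem ContDiff.isLittleO_sub_sub_half_fderiv_fderiv (hF : ContDiff ℝ 2 F)
    (h0 : fderiv ℝ F p₀ = 0) :
    (fun p => F p - F p₀ - (1 / 2) * fderiv ℝ (fderiv ℝ F) p₀ (p - p₀) (p - p₀))
      =o[𝓝 p₀] fun p => ‖p - p₀‖ ^ 2 := by
  set Q := fderiv ℝ (fderiv ℝ F) p₀
  have hsymm : ∀ a b, Q a b = Q b a := (hF.contDiffAt.isSymmSndFDerivAt (by simp)).eq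
  -- By symmetry of `Q` the remainder has derivative `DF p - Q (p - p₀)`, which is `o(‖p - p₀‖)`
  -- because `Q` is the derivative of `DF` at `p₀`; the mean value inequality gains one power.
  have hderiv : ∀ p, HasFDerivAt (fun p => F p - (1 / 2) * Q (p - p₀) (p - p₀))
      (fderiv ℝ F p - Q (p - p₀)) p := by
    intro p
    have hsub : HasFDerivAt (fun p : E => p - p₀) (ContinuousLinearMap.id ℝ E) p :=
      (hasFDerivAt_id p).sub_const p₀
    have hquad := (Q.hasFDerivAt.comp p hsub).clm_apply hsub
    refine ((hF.differentiable (by norm_num) p).hasFDerivAt.sub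
      (hquad.const_mul (1 / 2))).congr_fderiv ?_
    ext w
    simp [hsymm w]
    ring
  have hsmall : (fun p => fderiv ℝ F p - Q (p - p₀)) =o[𝓝 p₀] fun p => ‖p - p₀‖ ^ 1 := by
    have hDF := ((hF.fderiv_right (m := 1) (by norm_num)).differentiable one_ne_zero p₀)
    have := hDF.hasFDerivAt.isLittleO.norm_right
    rw [h0] at this
    simpa only [sub_zero, pow_one] using this
  have := convex_univ.isLittleO_pow_succ (Set.mem_univ p₀)
    (fun p _ => (hderiv p).hasFDerivWithinAt) (by rwa [nhdsWithin_univ])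
  rw [nhdsWithin_univ] at this
  refine this.congr_left fun p => ?_
  simp only [sub_self, map_zero]
  ring

theorem ContDiff.isLittleO_comp_add_clm (hF : ContDiff ℝ 2 F) (h0 : fderiv ℝ F p₀ = 0)
    (A : V →L[ℝ] E) :
    (fun v => F (p₀ + A v) - F p₀ - (1 / 2) * fderiv ℝ (fderiv ℝ F) p₀ (A v) (A v))
      =o[𝓝 0] fun v => ‖v‖ ^ 2 := by
  have hA : Tendsto (fun v => p₀ + A v) (𝓝 0) (𝓝 p₀) := by
    simpa using (A.continuous.const_add p₀).tendsto 0
  have h := (hF.isLittleO_sub_sub_half_fderiv_fderiv h0).comp_tendsto hA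
  simp only [Function.comp_def, add_sub_cancel_left] at h
  exact h.trans_isBigO ((A.isBigO_id _).norm_norm.pow 2)

theorem ContDiff.isLocalMin_comp_add_clm (hF : ContDiff ℝ 2 F) (h0 : fderiv ℝ F p₀ = 0)
    {A : V →L[ℝ] E} (hA : IsCoercive ((fderiv ℝ (fderiv ℝ F) p₀).bilinearComp A A)) :
    IsLocalMin (fun v => F (p₀ + A v)) 0 := by
  obtain ⟨c, hc, hcA⟩ := hA
  filter_upwards [(hF.isLittleO_comp_add_clm h0 A).def (half_pos hc)] with v hv
  have hQ := hcA v
  rw [bilinearComp_apply] at hQ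
  rw [Real.norm_eq_abs, abs_le] at hv
  simp only [norm_pow, norm_norm, map_zero, add_zero] at hv ⊢
  nlinarith

theorem ContDiff.isLocalMax_comp_add_clm (hF : ContDiff ℝ 2 F) (h0 : fderiv ℝ F p₀ = 0)
    {A : V →L[ℝ] E} (hA : IsCoercive (-(fderiv ℝ (fderiv ℝ F) p₀).bilinearComp A A)) :
    IsLocalMax (fun v => F (p₀ + A v)) 0 := by
  obtain ⟨c, hc, hcA⟩ := hA
  filter_upwards [(hF.isLittleO_comp_add_clm h0 A).def (half_pos hc)] with v hv
  have hQ := hcA v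
  rw [_root_.neg_apply, _root_.neg_apply, bilinearComp_apply] at hQ
  rw [Real.norm_eq_abs, abs_le] at hv
  simp only [norm_pow, norm_norm, map_zero, add_zero] at hv ⊢
  nlinarith

end Taylor

theorem isCoercive_of_apply_self_pos {V : Type*} [NormedAddCommGroup V] [NormedSpace ℝ V]
    [FiniteDimensional ℝ V] {B : V →L[ℝ] V →L[ℝ] ℝ} (hB : ∀ v ≠ 0, 0 < B v v) :
    IsCoercive B := by
  rcases subsingleton_or_nontrivial V with hV | hV
  · exact ⟨1, one_pos, fun u => by simp [Subsingleton.elim u 0]⟩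
  obtain ⟨w, hw, hmin⟩ := (isCompact_sphere (0 : V) 1).exists_isMinOn
    (NormedSpace.sphere_nonempty.2 zero_le_one)
    (by fun_prop : Continuous fun v => B v v).continuousOn
  refine ⟨B w w, hB w (ne_zero_of_mem_unit_sphere ⟨w, hw⟩), fun v => ?_⟩
  rcases eq_or_ne v 0 with rfl | hv
  · simp
  have hv' : 0 < ‖v‖ := norm_pos_iff.2 hv
  have hscaled : B w w ≤ ‖v‖⁻¹ * (‖v‖⁻¹ * B v v) := by
    simpa using hmin (show ‖v‖⁻¹ • v ∈ sphere (0 : V) 1 by simp [norm_smul, hv'.ne'])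
  calc B w w * ‖v‖ * ‖v‖ ≤ ‖v‖⁻¹ * (‖v‖⁻¹ * B v v) * ‖v‖ * ‖v‖ := by gcongr
    _ = B v v := by field_simp

theorem ContinuousLinearMap.apply_eq_dotProduct_mulVec {ι κ : Type*} [Fintype ι] [Fintype κ]
    [DecidableEq ι] [DecidableEq κ]
    (B : EuclideanSpace ℝ ι →L[ℝ] EuclideanSpace ℝ κ →L[ℝ] ℝ)
    (u : EuclideanSpace ℝ ι) (v : EuclideanSpace ℝ κ) :
    B u v = u.ofLp ⬝ᵥ (Matrix.of (fun i j => B (EuclideanSpace.single i 1)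
      (EuclideanSpace.single j 1)) *ᵥ v.ofLp) :=
  apply_eq_dotProduct_toMatrix₂_mulVec (EuclideanSpace.basisFun ι ℝ).toBasis
    (EuclideanSpace.basisFun κ ℝ).toBasis B.toLinearMap₁₂ u v

theorem Matrix.dotProduct_mulVec_schur {R ι κ : Type*} [CommRing R] [Fintype ι] [Fintype κ]
    [DecidableEq κ] (A : Matrix ι ι R) (B : Matrix κ κ R) (C : Matrix ι κ R) (D : Matrix κ ι R)
    (hB : IsUnit B.det) {u : ι → R} {v : κ → R} (hv : v = -(B⁻¹ * D) *ᵥ u) :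
    u ⬝ᵥ A *ᵥ u + u ⬝ᵥ C *ᵥ v + v ⬝ᵥ D *ᵥ u + v ⬝ᵥ B *ᵥ v =
      u ⬝ᵥ (A - C * B⁻¹ * D) *ᵥ u := by
  have hBv : B *ᵥ v = -(D *ᵥ u) := by
    rw [hv, mulVec_mulVec, Matrix.mul_neg, ← Matrix.mul_assoc, mul_nonsing_inv _ hB,
      Matrix.one_mul, neg_mulVec]
  have hCv : C *ᵥ v = -((C * B⁻¹ * D) *ᵥ u) := by
    rw [hv, mulVec_mulVec, Matrix.mul_neg, ← Matrix.mul_assoc, neg_mulVec]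
  rw [hBv, hCv, sub_mulVec, dotProduct_sub, dotProduct_neg, dotProduct_neg]
  ring

section PartialDerivatives

variable {X Y P S G : Type*} [NormedAddCommGroup X] [NormedSpace ℝ X] [NormedAddCommGroup Y]
  [NormedSpace ℝ Y] [NormedAddCommGroup P] [NormedSpace ℝ P] [NormedAddCommGroup S]
  [NormedSpace ℝ S] [NormedAddCommGroup G] [NormedSpace ℝ G]

theorem fderiv_apply_eq_fderiv_uncurry_inl {g : X → Y → G} {x : X} {y : Y}
    (hg : DifferentiableAt ℝ (Function.uncurry g) (x, y)) (w : X) :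
    fderiv ℝ (fun x' => g x' y) x w = fderiv ℝ (Function.uncurry g) (x, y) (inl ℝ X Y w) := by
  exact DFunLike.congr_fun (hg.hasFDerivAt.comp x (hasFDerivAt_prodMk_left (𝕜 := ℝ) x y)).fderiv w

theorem fderiv_apply_eq_fderiv_uncurry_inr {g : X → Y → G} {x : X} {y : Y}
    (hg : DifferentiableAt ℝ (Function.uncurry g) (x, y)) (w : Y) :
    fderiv ℝ (fun y' => g x y') y w = fderiv ℝ (Function.uncurry g) (x, y) (inr ℝ X Y w) := by
  exact DFunLike.congr_fun (hg.hasFDerivAt.comp y (hasFDerivAt_prodMk_right (𝕜 := ℝ) x y)).fderiv w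

theorem fderiv_uncurry_eq_zero {g : X → Y → G} {x : X} {y : Y}
    (hg : DifferentiableAt ℝ (Function.uncurry g) (x, y))
    (hx : fderiv ℝ (fun x' => g x' y) x = 0) (hy : fderiv ℝ (fun y' => g x y') y = 0) :
    fderiv ℝ (Function.uncurry g) (x, y) = 0 := by
  refine prod_ext ?_ ?_ <;> ext w
  · simpa [hx] using (fderiv_apply_eq_fderiv_uncurry_inl hg w).symm
  · simpa [hy] using (fderiv_apply_eq_fderiv_uncurry_inr hg w).symm

theorem fderiv_fderiv_apply_comp {g : P → G} {ι : S → P} {J : S →L[ℝ] P} {s : S}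
    (hg : DifferentiableAt ℝ (fderiv ℝ g) (ι s)) (hι : HasFDerivAt ι J s) (w : P) (v : S) :
    fderiv ℝ (fun s' => fderiv ℝ g (ι s') w) s v = fderiv ℝ (fderiv ℝ g) (ι s) (J v) w := by
  have h : HasFDerivAt (fun s' => fderiv ℝ g (ι s') w)
      ((apply ℝ G w).comp ((fderiv ℝ (fderiv ℝ g) (ι s)).comp J)) s :=
    (apply ℝ G w).hasFDerivAt.comp s (hg.hasFDerivAt.comp s hι)
  rw [h.fderiv]
  rfl

end PartialDerivatives

section HessianBlocks

variable {n m : ℕ} {f : EuclideanSpace ℝ (Fin n) → EuclideanSpace ℝ (Fin m) → ℝ}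

theorem hessXX_eq (hf : ContDiff ℝ 2 (Function.uncurry f)) (x : EuclideanSpace ℝ (Fin n))
    (y : EuclideanSpace ℝ (Fin m)) :
    hessXX f x y = Matrix.of fun i j =>
      (fderiv ℝ (fderiv ℝ (Function.uncurry f)) (x, y)).bilinearComp (inl ℝ _ _) (inl ℝ _ _)
        (EuclideanSpace.single i 1) (EuclideanSpace.single j 1) := by
  ext i j
  simp only [hessXX, of_apply,
    fun x' => fderiv_apply_eq_fderiv_uncurry_inl (hf.differentiable two_ne_zero (x', y))]
  exact fderiv_fderiv_apply_comp
    ((hf.fderiv_right (m := 1) (by norm_num)).differentiable one_ne_zero _)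
    (hasFDerivAt_prodMk_left x y) _ _

theorem hessYY_eq (hf : ContDiff ℝ 2 (Function.uncurry f)) (x : EuclideanSpace ℝ (Fin n))
    (y : EuclideanSpace ℝ (Fin m)) :
    hessYY f x y = Matrix.of fun i j =>
      (fderiv ℝ (fderiv ℝ (Function.uncurry f)) (x, y)).bilinearComp (inr ℝ _ _) (inr ℝ _ _)
        (EuclideanSpace.single i 1) (EuclideanSpace.single j 1) := by
  ext i j
  simp only [hessYY, of_apply,
    fun y' => fderiv_apply_eq_fderiv_uncurry_inr (hf.differentiable two_ne_zero (x, y'))]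
  exact fderiv_fderiv_apply_comp
    ((hf.fderiv_right (m := 1) (by norm_num)).differentiable one_ne_zero _)
    (hasFDerivAt_prodMk_right x y) _ _

theorem hessXY_eq (hf : ContDiff ℝ 2 (Function.uncurry f)) (x : EuclideanSpace ℝ (Fin n))
    (y : EuclideanSpace ℝ (Fin m)) :
    hessXY f x y = Matrix.of fun i j =>
      (fderiv ℝ (fderiv ℝ (Function.uncurry f)) (x, y)).bilinearComp (inl ℝ _ _) (inr ℝ _ _)
        (EuclideanSpace.single i 1) (EuclideanSpace.single j 1) := by
  ext i j
  simp only [hessXY, of_apply,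
    fun x' => fderiv_apply_eq_fderiv_uncurry_inr (hf.differentiable two_ne_zero (x', y))]
  exact fderiv_fderiv_apply_comp
    ((hf.fderiv_right (m := 1) (by norm_num)).differentiable one_ne_zero _)
    (hasFDerivAt_prodMk_left x y) _ _

theorem hessYX_eq (hf : ContDiff ℝ 2 (Function.uncurry f)) (x : EuclideanSpace ℝ (Fin n))
    (y : EuclideanSpace ℝ (Fin m)) :
    hessYX f x y = Matrix.of fun j i =>
      (fderiv ℝ (fderiv ℝ (Function.uncurry f)) (x, y)).bilinearComp (inr ℝ _ _) (inl ℝ _ _)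
        (EuclideanSpace.single j 1) (EuclideanSpace.single i 1) := by
  ext j i
  simp only [hessYX, of_apply,
    fun y' => fderiv_apply_eq_fderiv_uncurry_inl (hf.differentiable two_ne_zero (x, y'))]
  exact fderiv_fderiv_apply_comp
    ((hf.fderiv_right (m := 1) (by norm_num)).differentiable one_ne_zero _)
    (hasFDerivAt_prodMk_right x y) _ _

theorem fderiv_fderiv_uncurry_apply_prodMk (hf : ContDiff ℝ 2 (Function.uncurry f))
    (x : EuclideanSpace ℝ (Fin n)) (y : EuclideanSpace ℝ (Fin m))
    (u : EuclideanSpace ℝ (Fin n)) (v : EuclideanSpace ℝ (Fin m)) :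
    fderiv ℝ (fderiv ℝ (Function.uncurry f)) (x, y) (u, v) (u, v) =
      u.ofLp ⬝ᵥ hessXX f x y *ᵥ u.ofLp + u.ofLp ⬝ᵥ hessXY f x y *ᵥ v.ofLp +
        v.ofLp ⬝ᵥ hessYX f x y *ᵥ u.ofLp + v.ofLp ⬝ᵥ hessYY f x y *ᵥ v.ofLp := by
  rw [hessXX_eq hf, hessXY_eq hf, hessYX_eq hf, hessYY_eq hf, ← apply_eq_dotProduct_mulVec,
    ← apply_eq_dotProduct_mulVec, ← apply_eq_dotProduct_mulVec, ← apply_eq_dotProduct_mulVec]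
  have h : (u, v) = inl ℝ _ _ u + inr ℝ _ _ v := by simp
  simp only [h, map_add, _root_.add_apply, bilinearComp_apply]
  ring

end HessianBlocks

/-- The linearized best response of the maximizing player: `v = -B⁻¹ C u` solves `B v + C u = 0`,
the `y`-gradient of the quadratic model. -/
noncomputable def hessResponse {n m : ℕ}
    (f : EuclideanSpace ℝ (Fin n) → EuclideanSpace ℝ (Fin m) → ℝ)
    (x : EuclideanSpace ℝ (Fin n)) (y : EuclideanSpace ℝ (Fin m)) :
    EuclideanSpace ℝ (Fin n) →L[ℝ] EuclideanSpace ℝ (Fin m) :=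
  (toEuclideanLin (-((hessYY f x y)⁻¹ * hessYX f x y))).toContinuousLinearMap

section SecondOrderConditions

variable {n m : ℕ} {f : EuclideanSpace ℝ (Fin n) → EuclideanSpace ℝ (Fin m) → ℝ}
  {xstar : EuclideanSpace ℝ (Fin n)} {ystar : EuclideanSpace ℝ (Fin m)}

theorem isLocalMax_of_negDef_hessYY (hf : ContDiff ℝ 2 (Function.uncurry f))
    (h0 : fderiv ℝ (Function.uncurry f) (xstar, ystar) = 0)
    (hneg : Matrix.NegDef' (hessYY f xstar ystar)) :
    IsLocalMax (f xstar) ystar := by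
  have hcoer : IsCoercive (-(fderiv ℝ (fderiv ℝ (Function.uncurry f)) (xstar, ystar)).bilinearComp
      (inr ℝ _ _) (inr ℝ _ _)) := by
    refine isCoercive_of_apply_self_pos fun v hv => ?_
    rw [_root_.neg_apply, _root_.neg_apply, apply_eq_dotProduct_mulVec, ← hessYY_eq hf]
    simpa [neg_mulVec] using hneg.dotProduct_mulVec_pos (x := v.ofLp) (by simpa using hv)
  filter_upwards [(tendsto_sub_nhds_zero_iff.2 tendsto_id).eventually
    (hf.isLocalMax_comp_add_clm h0 hcoer)] with y hy
  simpa using hy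

theorem isLocalMin_comp_hessResponse (hf : ContDiff ℝ 2 (Function.uncurry f))
    (h0 : fderiv ℝ (Function.uncurry f) (xstar, ystar) = 0)
    (hneg : Matrix.NegDef' (hessYY f xstar ystar))
    (hschur : (hessXX f xstar ystar -
      hessXY f xstar ystar * (hessYY f xstar ystar)⁻¹ * hessYX f xstar ystar).PosDef) :
    IsLocalMin (fun x => f x (ystar + hessResponse f xstar ystar (x - xstar))) xstar := by
  have hdet : IsUnit (hessYY f xstar ystar).det :=
    isUnit_iff_ne_zero.2 fun h => by simpa [det_neg, h] using hneg.det_pos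
  set A := (ContinuousLinearMap.id ℝ _).prod (hessResponse f xstar ystar)
  have hcoer : IsCoercive
      ((fderiv ℝ (fderiv ℝ (Function.uncurry f)) (xstar, ystar)).bilinearComp A A) := by
    refine isCoercive_of_apply_self_pos fun u hu => ?_
    rw [bilinearComp_apply, prod_apply, id_apply, fderiv_fderiv_uncurry_apply_prodMk hf,
      dotProduct_mulVec_schur _ _ _ _ hdet (by simp [hessResponse, neg_mulVec])]
    simpa using hschur.dotProduct_mulVec_pos (x := u.ofLp) (by simpa using hu)
  filter_upwards [(tendsto_sub_nhds_zero_iff.2 tendsto_id).eventually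
    (hf.isLocalMin_comp_add_clm h0 hcoer)] with x hx
  simpa [A] using hx

end SecondOrderConditions

/-- Second-order sufficient condition: at a stationary point, if `∂²_{yy} f ≺ 0`
and the Schur complement is positive definite, then the point is local minimax. -/
theorem localMinimax_of_secondOrder_sufficient {n m : ℕ}
    (f : EuclideanSpace ℝ (Fin n) → EuclideanSpace ℝ (Fin m) → ℝ)
    (hf : ContDiff ℝ 2 (fun p : EuclideanSpace ℝ (Fin n) × EuclideanSpace ℝ (Fin m) => f p.1 p.2))
    (xstar : EuclideanSpace ℝ (Fin n)) (ystar : EuclideanSpace ℝ (Fin m))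
    (hstatx : gradient (fun x' => f x' ystar) xstar = 0)
    (hstaty : gradient (fun y' => f xstar y') ystar = 0)
    (hneg : Matrix.NegDef' (hessYY f xstar ystar))
    (hschur : (hessXX f xstar ystar -
      hessXY f xstar ystar * (hessYY f xstar ystar)⁻¹ * hessYX f xstar ystar).PosDef) :
    IsLocalMinimax f xstar ystar := by
  have hF : ContDiff ℝ 2 (Function.uncurry f) := hf
  have h0 : fderiv ℝ (Function.uncurry f) (xstar, ystar) = 0 :=
    fderiv_uncurry_eq_zero (hF.differentiable two_ne_zero _) (by simpa [gradient] using hstatx)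
      (by simpa [gradient] using hstaty)
  exact isLocalMinimax_of_isLocalMax_of_isLocalMin (isLocalMax_of_negDef_hessYY hF h0 hneg)
    (by fun_prop) (by simp) (isLocalMin_comp_hessResponse hF h0 hneg hschur)
end

section
/- Let C be a real n×m matrix and consider the bilinear game q(x,y) = xᵀC y on ℝ^n × ℝ^m. Then (x,y) is a global minimax point of q if and only if Cᵀx = 0; and (x,y) is a local minimax point of q if and only if Cᵀx = 0 and C y = 0. -/
/-! For fixed `x`, `q(x, ·) = ⟪Cᵀx, ·⟫` is linear, so it has a (local) maximum only when
`Cᵀx = 0`; then `q(x, ·) ≡ 0` and global minimaxity is automatic, since every upper bound of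
`q(x', ·)` dominates `q(x', 0) = 0`. For local minimaxity, Cauchy–Schwarz bounds the envelope at
`x + u` by `⟪x + u, Cy⟫ + ε‖Cᵀu‖`, while the envelope at `x` is at least `⟪x, Cy⟫`. Local
minimality in the direction `u = -t Cy` then gives `‖Cy‖² ≤ ε ‖CᵀCy‖` for arbitrarily small
`ε > 0`, so `Cy = 0`. -/

open Filter Matrix

/-- The bilinear game `q(x,y) = xᵀ C y`. -/
noncomputable def bilinGame {n m : ℕ} (C : Matrix (Fin n) (Fin m) ℝ)
    (x : EuclideanSpace ℝ (Fin n)) (y : EuclideanSpace ℝ (Fin m)) : ℝ :=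
  x ⬝ᵥ (C *ᵥ y)

open RealInnerProductSpace

section InnerProductSpace

variable {E F : Type*} [NormedAddCommGroup E] [InnerProductSpace ℝ E]

theorem eq_zero_of_forall_norm_sub_le_inner_le {w y₀ : E} {ε : ℝ} (hε : 0 < ε)
    (h : ∀ y, ‖y - y₀‖ ≤ ε → ⟪w, y⟫ ≤ ⟪w, y₀⟫) : w = 0 := by
  have hmax : IsLocalMax (fun y => ⟪w, y⟫) y₀ :=
    mem_of_superset (Metric.closedBall_mem_nhds y₀ hε) fun y hy =>
      h y (mem_closedBall_iff_norm.mp hy)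
  have hw : innerSL ℝ w = 0 := hmax.hasFDerivAt_eq_zero (innerSL ℝ w).hasFDerivAt
  rw [← norm_eq_zero, ← innerSL_apply_norm ℝ, hw, norm_zero]

theorem inner_le_inner_add_mul_norm {w y y₀ : E} {ε : ℝ} (hy : ‖y - y₀‖ ≤ ε) :
    ⟪w, y⟫ ≤ ⟪w, y₀⟫ + ε * ‖w‖ :=
  calc ⟪w, y⟫ = ⟪w, y₀⟫ + ⟪w, y - y₀⟫ := by rw [← inner_add_right, add_sub_cancel]
    _ ≤ ⟪w, y₀⟫ + ‖w‖ * ‖y - y₀‖ := by gcongr; exact real_inner_le_norm _ _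
    _ ≤ ⟪w, y₀⟫ + ε * ‖w‖ := by rw [mul_comm]; gcongr

theorem sq_norm_le_of_forall_norm_le_inner_add_nonneg [NormedAddCommGroup F] [NormedSpace ℝ F]
    (L : E →ₗ[ℝ] F) {v : E} {δ ε : ℝ} (hδ : 0 < δ)
    (h : ∀ u, ‖u‖ ≤ δ → 0 ≤ ⟪u, v⟫ + ε * ‖L u‖) : ‖v‖ ^ 2 ≤ ε * ‖L v‖ := by
  rcases eq_or_ne v 0 with rfl | hv
  · simp
  have hnv : 0 < ‖v‖ := norm_pos_iff.mpr hv
  set t := δ / ‖v‖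
  have ht : 0 < t := div_pos hδ hnv
  have key := h (-(t • v)) (by rw [norm_neg, norm_smul, Real.norm_of_nonneg ht.le,
    div_mul_cancel₀ _ hnv.ne'])
  rw [inner_neg_left, real_inner_smul_left, real_inner_self_eq_norm_sq, map_neg, norm_neg,
    map_smul, norm_smul, Real.norm_of_nonneg ht.le] at key
  nlinarith

end InnerProductSpace

section Envelope

variable {n m : ℕ} {f : EuclideanSpace ℝ (Fin n) → EuclideanSpace ℝ (Fin m) → ℝ}
  {ystar : EuclideanSpace ℝ (Fin m)} {ε : ℝ} {x : EuclideanSpace ℝ (Fin n)}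

theorem le_envU (hε : 0 ≤ ε) : (f x ystar : EReal) ≤ envU f ystar ε x :=
  le_iSup₂_of_le (f := fun y (_ : ‖y - ystar‖ ≤ ε) => (f x y : EReal)) ystar
    (by simpa using hε) le_rfl

theorem envU_le {c : ℝ} (h : ∀ y, ‖y - ystar‖ ≤ ε → f x y ≤ c) : envU f ystar ε x ≤ c :=
  iSup₂_le fun y hy => EReal.coe_le_coe_iff.mpr (h y hy)

end Envelope

section BilinearGame

variable {n m : ℕ} (C : Matrix (Fin n) (Fin m) ℝ)

theorem bilinGame_eq_inner_toEuclideanLin (x : EuclideanSpace ℝ (Fin n))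
    (y : EuclideanSpace ℝ (Fin m)) : bilinGame C x y = ⟪x, toEuclideanLin C y⟫ := by
  rw [EuclideanSpace.inner_eq_star_dotProduct]
  simp [bilinGame, toLpLin_apply, dotProduct_comm]

theorem bilinGame_eq_inner_toEuclideanLin_transpose (x : EuclideanSpace ℝ (Fin n))
    (y : EuclideanSpace ℝ (Fin m)) : bilinGame C x y = ⟪toEuclideanLin Cᵀ x, y⟫ := by
  rw [EuclideanSpace.inner_eq_star_dotProduct]
  simp [bilinGame, toLpLin_apply, dotProduct_mulVec, mulVec_transpose, dotProduct_comm]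

theorem toEuclideanLin_apply_eq_zero_iff {𝕜 ι κ : Type*} [RCLike 𝕜] [Fintype κ] [DecidableEq κ]
    (M : Matrix ι κ 𝕜) (v : EuclideanSpace 𝕜 κ) : toEuclideanLin M v = 0 ↔ M *ᵥ v = 0 := by
  rw [toLpLin_apply, WithLp.toLp_eq_zero]

variable {C} {x : EuclideanSpace ℝ (Fin n)} {y : EuclideanSpace ℝ (Fin m)}

theorem bilinGame_eq_zero_of_transpose_mulVec_eq_zero (hx : Cᵀ *ᵥ x = 0)
    (y' : EuclideanSpace ℝ (Fin m)) : bilinGame C x y' = 0 := by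
  rw [bilinGame_eq_inner_toEuclideanLin_transpose, (toEuclideanLin_apply_eq_zero_iff _ _).mpr hx,
    inner_zero_left]

theorem bilinGame_eq_zero_of_mulVec_eq_zero (hy : C *ᵥ y = 0)
    (x' : EuclideanSpace ℝ (Fin n)) : bilinGame C x' y = 0 := by
  simp [bilinGame, hy]

theorem transpose_mulVec_eq_zero_of_forall_norm_sub_le_bilinGame_le {ε : ℝ} (hε : 0 < ε)
    (h : ∀ y', ‖y' - y‖ ≤ ε → bilinGame C x y' ≤ bilinGame C x y) : Cᵀ *ᵥ x = 0 := by
  simp only [bilinGame_eq_inner_toEuclideanLin_transpose] at h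
  exact (toEuclideanLin_apply_eq_zero_iff _ _).mp (eq_zero_of_forall_norm_sub_le_inner_le hε h)

theorem envU_bilinGame_le (ε : ℝ) (x' : EuclideanSpace ℝ (Fin n)) :
    envU (bilinGame C) y ε x' ≤ (bilinGame C x' y + ε * ‖toEuclideanLin Cᵀ x'‖ : ℝ) :=
  envU_le fun y' hy' => by
    simpa only [bilinGame_eq_inner_toEuclideanLin_transpose] using inner_le_inner_add_mul_norm hy'

theorem isGlobalMinimax_bilinGame_iff : IsGlobalMinimax (bilinGame C) x y ↔ Cᵀ *ᵥ x = 0 := by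
  refine ⟨fun h => transpose_mulVec_eq_zero_of_forall_norm_sub_le_bilinGame_le one_pos
    fun y' _ => h.1 y', fun hx => ?_⟩
  have hxy := bilinGame_eq_zero_of_transpose_mulVec_eq_zero hx
  refine ⟨fun y' => ?_, fun x' c hc => ?_⟩
  · rw [hxy, hxy]
  · rw [hxy]
    simpa [bilinGame] using hc 0

theorem mulVec_eq_zero_of_isLocalMinimax_bilinGame (h : IsLocalMinimax (bilinGame C) x y)
    (hx : Cᵀ *ᵥ x = 0) : C *ᵥ y = 0 := by
  obtain ⟨-, εs, hpos, hεs, hmin⟩ := h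
  set v := toEuclideanLin C y
  have key : ∀ k, ‖v‖ ^ 2 ≤ εs k * ‖toEuclideanLin Cᵀ v‖ := fun k => by
    obtain ⟨δ, hδ, hδmin⟩ := hmin k
    refine sq_norm_le_of_forall_norm_le_inner_add_nonneg _ hδ fun u hu => ?_
    have := ((le_envU (hpos k).le).trans (hδmin (x + u) (by simpa using hu))).trans
      (envU_bilinGame_le _ _)
    rw [EReal.coe_le_coe_iff, map_add, (toEuclideanLin_apply_eq_zero_iff _ _).mpr hx, zero_add,
      bilinGame_eq_inner_toEuclideanLin, bilinGame_eq_inner_toEuclideanLin, inner_add_left] at this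
    linarith
  have : ‖v‖ ^ 2 ≤ 0 := ge_of_tendsto' (by simpa using hεs.mul_const _) key
  rw [← toEuclideanLin_apply_eq_zero_iff, ← norm_eq_zero, ← sq_nonpos_iff]
  exact this

theorem isLocalMinimax_bilinGame_iff :
    IsLocalMinimax (bilinGame C) x y ↔ Cᵀ *ᵥ x = 0 ∧ C *ᵥ y = 0 := by
  refine ⟨fun h => ?_, fun ⟨hx, hy⟩ => ?_⟩
  · obtain ⟨ε, hε, hmax⟩ := h.1
    have hx := transpose_mulVec_eq_zero_of_forall_norm_sub_le_bilinGame_le hε hmax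
    exact ⟨hx, mulVec_eq_zero_of_isLocalMinimax_bilinGame h hx⟩
  have hxy := bilinGame_eq_zero_of_transpose_mulVec_eq_zero hx
  refine ⟨⟨1, one_pos, fun y' _ => by rw [hxy, hxy]⟩, fun k => 1 / (k + 1), fun k => by positivity,
    tendsto_one_div_add_atTop_nhds_zero_nat, fun k => ⟨1, one_pos, fun x' _ => ?_⟩⟩
  calc envU (bilinGame C) y (1 / (k + 1)) x ≤ (0 : ℝ) := envU_le fun y' _ => (hxy y').le
    _ = bilinGame C x' y := by rw [bilinGame_eq_zero_of_mulVec_eq_zero hy]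
    _ ≤ envU (bilinGame C) y (1 / (k + 1)) x' := le_envU (by positivity)

end BilinearGame

/-- In the bilinear game `q(x,y) = xᵀ C y`, global minimax points are exactly the
pairs with `Cᵀ x = 0`, and local minimax points are exactly the pairs with
`Cᵀ x = 0` and `C y = 0`. -/
theorem bilinGame_minimax_characterization {n m : ℕ} (C : Matrix (Fin n) (Fin m) ℝ)
    (x : EuclideanSpace ℝ (Fin n)) (y : EuclideanSpace ℝ (Fin m)) :
    (IsGlobalMinimax (bilinGame C) x y ↔ Cᵀ *ᵥ x = 0) ∧
    (IsLocalMinimax (bilinGame C) x y ↔ (Cᵀ *ᵥ x = 0 ∧ C *ᵥ y = 0)) :=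
  ⟨isGlobalMinimax_bilinGame_iff, isLocalMinimax_bilinGame_iff⟩
end
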